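/- arXiv:1706.09185 — 4 statements merged into one kernel-verified Lean document; each statement's English description precedes it below -/
import Mathlib

section
/- In a caterpillar with leaves u_1,...,u_s as above, if x_{i-1} + y_{i-1} > x_i + y_i, then for every j < i-1, d(u_j, u_{i-1}) > d(u_j, u_i), and for every j > i, d(u_j, u_{i-1}) > d(u_j, u_i); consequently any set P containing u_i with pairwise distances at least λ can replace u_i with u_{i-1} while preserving pairwise distances at least λ, provided u_{i-1} ∉ P. -/
/-!
Measured from a leaf `u_j` on one side of both `u_{i-1}` and `u_i`, the spine parts of the two
distances differ by exactly the gap between the spine positions, so comparing the distances is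
comparing `x + y` (for `j` on the left) or `y - x` (for `j` on the right). The hypothesis
`x_i + y_i < x_{i-1} + y_{i-1}` settles the first comparison directly, and also the second, because
it forces `y_i - y_{i-1} < x_{i-1} - x_i < 0`. Hence `u_{i-1}` is farther than `u_i` from every
other leaf, and swapping `u_i` for `u_{i-1}` in a `λ`-separated set keeps it separated.
-/

section Caterpillar

variable {ι : Type*} (x y : ι → ℝ)

def caterpillarDist (j k : ι) : ℝ := |x j - x k| + y j + y k

theorem caterpillarDist_comm (j k : ι) : caterpillarDist x y j k = caterpillarDist x y k j := by
  simp only [caterpillarDist, abs_sub_comm]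
  ring

variable {x y}

theorem caterpillarDist_lt_of_left {j a b : ι} (ha : x j < x a) (hb : x j < x b)
    (h : x a + y a < x b + y b) : caterpillarDist x y j a < caterpillarDist x y j b := by
  simp only [caterpillarDist, abs_of_neg (sub_neg.2 ha), abs_of_neg (sub_neg.2 hb)]
  linarith

theorem caterpillarDist_lt_of_right {j a b : ι} (ha : x a < x j) (hb : x b < x j)
    (h : y a - x a < y b - x b) : caterpillarDist x y j a < caterpillarDist x y j b := by
  simp only [caterpillarDist, abs_of_pos (sub_pos.2 ha), abs_of_pos (sub_pos.2 hb)]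
  linarith

end Caterpillar

theorem Set.Pairwise.diff_singleton_union_singleton_of_le {α : Type*} {d : α → α → ℝ} {lam : ℝ}
    {P : Set α} {a b : α} (hd : ∀ u v, d u v = d v u) (hP : P.Pairwise fun u v => lam ≤ d u v)
    (ha : a ∈ P) (hfar : ∀ c ∈ P, c ≠ a → c ≠ b → d c a ≤ d c b) :
    ((P \ {a}) ∪ {b}).Pairwise fun u v => lam ≤ d u v := by
  rw [Set.union_singleton, Set.pairwise_insert]
  refine ⟨hP.mono Set.sdiff_subset, fun c ⟨hcP, hca⟩ hbc => ?_⟩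
  have hcb : lam ≤ d c b := (hP hcP ha hca).trans (hfar c hcP hca (Ne.symm hbc))
  exact ⟨hd b c ▸ hcb, hcb⟩

theorem stmt_5_general (lam : ℝ) (x y : ℕ → ℝ)
    (hx : StrictMono x)
    (d : ℕ → ℕ → ℝ) (hd : ∀ j k, d j k = |x j - x k| + y j + y k)
    (i : ℕ) (hi : 1 ≤ i) (h : x i + y i < x (i - 1) + y (i - 1)) :
    (∀ j, j < i - 1 → d j i < d j (i - 1)) ∧
    (∀ j, i < j → d j i < d j (i - 1)) ∧
    (∀ P : Set ℕ, i ∈ P → (i - 1) ∉ P →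
      (∀ a ∈ P, ∀ b ∈ P, a ≠ b → lam ≤ d a b) →
      (∀ a ∈ (P \ {i}) ∪ {i - 1}, ∀ b ∈ (P \ {i}) ∪ {i - 1}, a ≠ b → lam ≤ d a b)) := by
  obtain rfl : d = caterpillarDist x y := funext fun j => funext (hd j)
  have hpred : i - 1 < i := Nat.sub_lt hi one_pos
  have hxpred : x (i - 1) < x i := hx hpred
  have left : ∀ j, j < i - 1 → caterpillarDist x y j i < caterpillarDist x y j (i - 1) :=
    fun j hj => caterpillarDist_lt_of_left (hx (hj.trans hpred)) (hx hj) h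
  have right : ∀ j, i < j → caterpillarDist x y j i < caterpillarDist x y j (i - 1) :=
    fun j hj => caterpillarDist_lt_of_right (hx hj) (hx (hpred.trans hj))
      (by linarith)
  refine ⟨left, right, fun P hiP _ hP =>
    Set.Pairwise.diff_singleton_union_singleton_of_le (caterpillarDist_comm x y) hP hiP
      fun c _ hci hci₁ => ?_⟩
  rcases lt_or_gt_of_ne hci₁ with hc | hc
  · exact (left c hc).le
  · exact (right c (by omega)).le

/-- In the caterpillar with `d j k = |x j - x k| + y j + y k`, if
`x (i-1) + y (i-1) > x i + y i` then `u_{i-1}` is strictly farther than `u_i`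
from every `u_j` with `j < i-1` or `j > i`; consequently any set `P` with
pairwise distances at least `λ` containing `i` but not `i-1` can replace `i`
by `i-1` while keeping all pairwise distances at least `λ`. -/
theorem stmt_5 (lam : ℝ) (hlam : 0 < lam) (x y : ℕ → ℝ)
    (hx : StrictMono x) (hy0 : ∀ j, 0 ≤ y j) (hy : ∀ j, y j < lam / 2)
    (d : ℕ → ℕ → ℝ) (hd : ∀ j k, d j k = |x j - x k| + y j + y k)
    (i : ℕ) (hi : 1 ≤ i) (h : x i + y i < x (i - 1) + y (i - 1)) :
    (∀ j, j < i - 1 → d j i < d j (i - 1)) ∧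
    (∀ j, i < j → d j i < d j (i - 1)) ∧
    (∀ P : Set ℕ, i ∈ P → (i - 1) ∉ P →
      (∀ a ∈ P, ∀ b ∈ P, a ≠ b → lam ≤ d a b) →
      (∀ a ∈ (P \ {i}) ∪ {i - 1}, ∀ b ∈ (P \ {i}) ∪ {i - 1}, a ≠ b → lam ≤ d a b)) :=
  stmt_5_general lam x y hx d hd i hi h
end

section
/- For all positive reals x ≤ y, it holds that 2x·log(2x) + 2y·log y + x·log(2y/x) ≤ 2(x+y)·log(x+y). -/
open Real

/-!
Expanding the base-2 logarithms, the claim reads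
`3x + x log x + (x + 2y) log y ≤ 2(x + y) log(x + y)`. Two elementary facts split it:
AM-GM `4xy ≤ (x + y)²` gives `2x + x log x + x log y ≤ 2x log(x + y)`, and Bernoulli's
inequality `2^t ≤ 1 + t` for `t = x / y ∈ [0, 1]` gives `x ≤ y (log(x + y) - log y)`,
which covers the remaining `x + 2y log y ≤ 2y log(x + y)`.
-/

lemma logb_two_add_logb_two_add_two_le {x y : ℝ} (hx : 0 < x) (hy : 0 < y) :
    logb 2 x + logb 2 y + 2 ≤ 2 * logb 2 (x + y) := by
  have amgm : 4 * (x * y) ≤ (x + y) ^ 2 := by nlinarith [sq_nonneg (x - y)]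
  have h4 : logb 2 4 = 2 := by
    rw [show (4 : ℝ) = 2 ^ 2 by norm_num, logb_pow, logb_self_eq_one one_lt_two]; norm_num
  have hlog := logb_le_logb_of_le one_lt_two (by positivity) amgm
  rw [logb_mul (by norm_num) (by positivity), logb_mul hx.ne' hy.ne', logb_pow, h4] at hlog
  push_cast at hlog
  linarith

lemma le_logb_two_one_add {t : ℝ} (ht₀ : 0 ≤ t) (ht₁ : t ≤ 1) : t ≤ logb 2 (1 + t) := by
  rw [le_logb_iff_rpow_le one_lt_two (by linarith)]
  simpa [one_add_one_eq_two] using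
    rpow_one_add_le_one_add_mul_self (s := 1) (by norm_num) ht₀ ht₁

lemma le_mul_logb_two_add_sub_logb_two {x y : ℝ} (hx : 0 ≤ x) (hxy : x ≤ y) (hy : 0 < y) :
    x ≤ y * (logb 2 (x + y) - logb 2 y) := by
  have hlog : logb 2 (x + y) - logb 2 y = logb 2 (1 + x / y) := by
    rw [← logb_div (by positivity) hy.ne', add_div, div_self hy.ne', add_comm]
  rw [hlog, ← div_le_iff₀' hy]
  exact le_logb_two_one_add (div_nonneg hx hy.le) ((div_le_one hy).2 hxy)

/-- For all positive reals `x ≤ y`,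
`2x·log(2x) + 2y·log y + x·log(2y/x) ≤ 2(x+y)·log(x+y)` (log base 2). -/
theorem stmt_9 (x y : ℝ) (hx : 0 < x) (hxy : x ≤ y) :
    2 * x * logb 2 (2 * x) + 2 * y * logb 2 y + x * logb 2 (2 * y / x) ≤
      2 * (x + y) * logb 2 (x + y) := by
  have hy : 0 < y := hx.trans_le hxy
  have h2 : logb 2 2 = 1 := logb_self_eq_one one_lt_two
  rw [logb_mul two_ne_zero hx.ne', logb_div (by positivity) hx.ne',
    logb_mul two_ne_zero hy.ne', h2]
  have amgm := mul_le_mul_of_nonneg_left (logb_two_add_logb_two_add_two_le hx hy) hx.le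
  have bernoulli := le_mul_logb_two_add_sub_logb_two hx.le hxy hy
  linarith
end

section
/- Define S(n) recursively on binary trees: for a leaf S = 0; for a unary node with subtree of size n−1, S(n) = S(n−1); for a binary node with subtrees of sizes x ≤ y (so n = x+y+1), S(n) = S(x) + S(y) + c·x·log(2y/x). Then S(n) ≤ 2c·n·log n for all n ≥ 2. -/
/-!
Induction on the tree. At a binary node with subtree sizes `x ≤ y` we have
`log(2y/x) = 1 + log y - log x`, so after the induction hypotheses the left side is
`c x (log x + log y + 1) + 2 c y log y`. Since `2xy ≤ (x + y + 1)²` gives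
`log x + log y + 1 ≤ 2 log (x + y + 1)`, this is at most `2 c (x + y) log (x + y + 1)`.
-/

open Real

/-- Binary trees: leaves, unary nodes, and binary nodes. -/
inductive BT where
  | leaf : BT
  | node1 (t : BT) : BT
  | node2 (l r : BT) : BT

/-- Number of nodes of a binary tree. -/
def BT.size : BT → ℕ
  | BT.leaf => 1
  | BT.node1 t => t.size + 1
  | BT.node2 l r => l.size + r.size + 1

/-- Total cost `S`: a leaf costs `0`; a unary node costs the cost of its subtree;
a binary node with subtree sizes `x ≤ y` costs the two subtree costs plus
`c·x·log(2y/x)` (log base 2). -/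
noncomputable def BT.cost (c : ℝ) : BT → ℝ
  | BT.leaf => 0
  | BT.node1 t => t.cost c
  | BT.node2 l r =>
      l.cost c + r.cost c +
        c * (min l.size r.size : ℝ) *
          logb 2 (2 * (max l.size r.size : ℝ) / (min l.size r.size : ℝ))

lemma BT.one_le_size : ∀ t : BT, 1 ≤ t.size
  | BT.leaf => le_rfl
  | BT.node1 _ => by simp [BT.size]
  | BT.node2 _ _ => by simp [BT.size]

lemma mul_logb_two_le_mul_logb_two {x y : ℝ} (hx : 1 ≤ x) (hxy : x ≤ y) :
    x * logb 2 x ≤ y * logb 2 y :=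
  mul_le_mul hxy (logb_le_logb_of_le one_lt_two (by linarith) hxy)
    (logb_nonneg one_lt_two hx) (by linarith)

lemma logb_two_add_logb_two_add_one_le {x y : ℝ} (hx : 0 < x) (hy : 0 < y) :
    logb 2 x + logb 2 y + 1 ≤ 2 * logb 2 (x + y + 1) := by
  have h : logb 2 (2 * x * y) ≤ logb 2 ((x + y + 1) ^ 2) :=
    logb_le_logb_of_le one_lt_two (by positivity) (by nlinarith [sq_nonneg (x - y)])
  rw [logb_mul (by positivity) hy.ne', logb_mul two_ne_zero hx.ne',
    logb_self_eq_one one_lt_two, logb_pow] at h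
  push_cast at h
  linarith

lemma merge_cost_le {x y : ℝ} (hx : 0 < x) (hy : 0 < y) :
    2 * x * logb 2 x + 2 * y * logb 2 y + x * logb 2 (2 * y / x) ≤
      2 * (x + y + 1) * logb 2 (x + y + 1) := by
  have hlog : logb 2 (2 * y / x) = 1 + logb 2 y - logb 2 x := by
    rw [logb_div (by positivity) hx.ne', logb_mul two_ne_zero hy.ne',
      logb_self_eq_one one_lt_two]
  have hyn : logb 2 y ≤ logb 2 (x + y + 1) := logb_le_logb_of_le one_lt_two hy (by linarith)
  have hn : 0 ≤ logb 2 (x + y + 1) := logb_nonneg one_lt_two (by linarith)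
  rw [hlog]
  linarith [mul_le_mul_of_nonneg_left (logb_two_add_logb_two_add_one_le hx hy) hx.le,
    mul_le_mul_of_nonneg_left hyn hy.le]

lemma BT.cost_le {c : ℝ} (hc : 0 ≤ c) :
    ∀ t : BT, t.cost c ≤ 2 * c * (t.size : ℝ) * logb 2 (t.size : ℝ)
  | BT.leaf => by simp [BT.cost, BT.size]
  | BT.node1 t => by
    have hmono := mul_logb_two_le_mul_logb_two
      (by exact_mod_cast t.one_le_size : (1 : ℝ) ≤ t.size) (le_add_of_nonneg_right zero_le_one)
    simp only [BT.cost, BT.size]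
    push_cast
    linarith [t.cost_le hc, mul_le_mul_of_nonneg_left hmono hc]
  | BT.node2 l r => by
    have hl : (0 : ℝ) < l.size := by exact_mod_cast l.one_le_size
    have hr : (0 : ℝ) < r.size := by exact_mod_cast r.one_le_size
    have ih : l.cost c + r.cost c ≤
        c * (2 * l.size * logb 2 l.size + 2 * r.size * logb 2 r.size) := by
      linarith [l.cost_le hc, r.cost_le hc]
    simp only [BT.cost, BT.size]
    push_cast
    rcases le_total (l.size : ℝ) r.size with h | h
    · rw [min_eq_left h, max_eq_right h]
      linarith [mul_le_mul_of_nonneg_left (merge_cost_le hl hr) hc]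
    · rw [min_eq_right h, max_eq_left h]
      have hm := merge_cost_le hr hl
      rw [add_comm (r.size : ℝ)] at hm
      linarith [mul_le_mul_of_nonneg_left hm hc]

theorem stmt_10_general (c : ℝ) (hc : 0 < c) (t : BT) :
    t.cost c ≤ 2 * c * (t.size : ℝ) * logb 2 (t.size : ℝ) :=
  t.cost_le hc.le

/-- `S(n) ≤ 2c·n·log n` for every binary tree with `n ≥ 2` nodes. -/
theorem stmt_10 (c : ℝ) (hc : 0 < c) (t : BT) (hn : 2 ≤ t.size) :
    t.cost c ≤ 2 * c * (t.size : ℝ) * logb 2 (t.size : ℝ) :=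
  stmt_10_general c hc t
end

section
/- For x a power of 2 with 2 ≤ x ≤ y, the sum over i from 0 to log(x/2) of 2^i · log(y/2^i) is at most x·log(2y/x) + x − 2. -/
open Real

/-! With `x = 2^k` and `L = log y`, each term is `2^i (L - i)`, so the sum has the closed form
`L (x - 1) - ((k - 2) x + 2)`. This is exactly the right-hand side minus `L`, and `L ≥ 0`
because `y ≥ x ≥ 1`. -/

theorem Finset.sum_range_two_pow_mul_sub {R : Type*} [CommRing R] (L : R) (k : ℕ) :
    ∑ i ∈ Finset.range k, (2 : R) ^ i * (L - i) = L * (2 ^ k - 1) - ((k - 2) * 2 ^ k + 2) := by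
  induction k with
  | zero => simp
  | succ n ih => rw [Finset.sum_range_succ, ih]; push_cast; ring

theorem Real.logb_div_pow_self {b y : ℝ} (hb : 1 < b) (hy : y ≠ 0) (i : ℕ) :
    logb b (y / b ^ i) = logb b y - i := by
  rw [logb_div hy (pow_ne_zero _ (by linarith)), logb_pow, logb_self_eq_one hb, mul_one]

theorem stmt_11_general (k : ℕ) (y : ℝ) (hy : (2 ^ k : ℝ) ≤ y) :
    (∑ i ∈ Finset.range k, (2 ^ i : ℝ) * logb 2 (y / 2 ^ i)) ≤
      (2 ^ k : ℝ) * logb 2 (2 * y / 2 ^ k) + 2 ^ k - 2 := by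
  have hy0 : y ≠ 0 := (lt_of_lt_of_le (by positivity) hy).ne'
  have hsum : ∑ i ∈ Finset.range k, (2 ^ i : ℝ) * logb 2 (y / 2 ^ i) =
      logb 2 y * (2 ^ k - 1) - ((k - 2) * 2 ^ k + 2) := by
    simp only [logb_div_pow_self one_lt_two hy0, Finset.sum_range_two_pow_mul_sub]
  have hrhs : logb 2 (2 * y / 2 ^ k) = logb 2 y + 1 - k := by
    rw [mul_div_assoc, logb_mul two_ne_zero (div_ne_zero hy0 (by positivity)),
      logb_div_pow_self one_lt_two hy0, logb_self_eq_one one_lt_two]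
    ring
  have hlog : 0 ≤ logb 2 y := logb_nonneg one_lt_two ((one_le_pow₀ one_le_two).trans hy)
  rw [hsum, hrhs]
  linarith

/-- For `x = 2^k` a power of two with `2 ≤ x ≤ y`,
`∑_{i=0}^{log(x/2)} 2^i · log(y/2^i) ≤ x·log(2y/x) + x − 2` (log base 2). -/
theorem stmt_11 (k : ℕ) (hk : 1 ≤ k) (y : ℝ) (hy : (2 ^ k : ℝ) ≤ y) :
    (∑ i ∈ Finset.range k, (2 ^ i : ℝ) * logb 2 (y / 2 ^ i)) ≤
      (2 ^ k : ℝ) * logb 2 (2 * y / 2 ^ k) + 2 ^ k - 2 :=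
  stmt_11_general k y hy
end
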